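/- Every finite simple connected graph G satisfies dim_l(G) ≤ ((ω(G)−1)/ω(G))·n(G), with equality if and only if G is the complete graph K_{n(G)}. -/

import Mathlib

open SimpleGraph

variable {V : Type*} [Fintype V] [DecidableEq V]

/-- `S` is a local resolving set of `G`. -/
def IsLocalResolving (G : SimpleGraph V) (S : Finset V) : Prop :=
  ∀ u v : V, G.Adj u v → u ∉ S → v ∉ S → ∃ w ∈ S, G.dist u w ≠ G.dist v w

/-- The local metric dimension of `G`. -/
noncomputable def dimL (G : SimpleGraph V) : ℕ :=
  sInf {k | ∃ S : Finset V, S.card = k ∧ IsLocalResolving G S}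

/-- `S` is a local adjacency resolving set of `G`. -/
def IsLocalAdjResolving (G : SimpleGraph V) (S : Finset V) : Prop :=
  ∀ u v : V, G.Adj u v → u ∉ S → v ∉ S → ∃ w ∈ S, Xor' (G.Adj w u) (G.Adj w v)

/-- The local adjacency metric dimension of `G`. -/
noncomputable def dimAL (G : SimpleGraph V) : ℕ :=
  sInf {k | ∃ S : Finset V, S.card = k ∧ IsLocalAdjResolving G S}

/-- `S` is a resolving set of `G`. -/
def IsResolving (G : SimpleGraph V) (S : Finset V) : Prop :=
  ∀ u v : V, u ≠ v → u ∉ S → v ∉ S → ∃ w ∈ S, G.dist u w ≠ G.dist v w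

/-- The metric dimension of `G`. -/
noncomputable def dimM (G : SimpleGraph V) : ℕ :=
  sInf {k | ∃ S : Finset V, S.card = k ∧ IsResolving G S}

/-- `S` is an adjacency resolving set of `G`. -/
def IsAdjResolving (G : SimpleGraph V) (S : Finset V) : Prop :=
  ∀ u v : V, u ≠ v → u ∉ S → v ∉ S → ∃ w ∈ S, Xor' (G.Adj w u) (G.Adj w v)

/-- The adjacency metric dimension of `G`. -/
noncomputable def dimA (G : SimpleGraph V) : ℕ :=
  sInf {k | ∃ S : Finset V, S.card = k ∧ IsAdjResolving G S}

/-!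
Call a colouring of a vertex set `U` good if every monochromatic edge in `U` is distinguished,
by adjacency, by a vertex of `U` of another colour. Then, for every colour class `C`, the
vertices outside `C` form a local resolving set, adjacency being distance `1`. Good colourings
with `ω` colours exist greedily: the colours a new vertex `b` must avoid are those of earlier
neighbours not yet distinguished from `b`, and one such neighbour per colour gives a clique of
neighbours of `b`.

The complete graph attains the bound. Otherwise pick `v` with a largest closed neighbourhood;
its closed twins `T` form a clique with a common neighbour outside `T`, so `|T| < ω`. Take a good
colouring of `U = V \ T` that colours the neighbours `P` of `v` in `U` first and gives each
vertex of `P` a non-neighbour in `P` of another colour: by maximality of `N[v]` such a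
non-neighbour exists, and cliques in `P` extend by `v`, which leaves a colour to spare. Then `v`
can join a largest class `C` of `U`, and `n - |T| ≤ ω |C|` gives `n < ω (|C| + 1)`.
-/

open Finset

namespace SimpleGraph

section Coloring

variable {α : Type*} [DecidableEq α] (G : SimpleGraph α)

def MonoEdgesResolved (A : Finset α) (c : α → ℕ) : Prop :=
  ∀ u ∈ A, ∀ v ∈ A, G.Adj u v → c u = c v → ∃ w ∈ A, c w ≠ c u ∧ Xor (G.Adj w u) (G.Adj w v)

def ExistsNonadjOtherColor (A : Finset α) (c : α → ℕ) : Prop :=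
  ∀ b ∈ A, ∃ w ∈ A, ¬ G.Adj b w ∧ c w ≠ c b

variable {G}

theorem MonoEdgesResolved.exists_extend_insert {A : Finset α} {c : α → ℕ} {b : α} {t : ℕ}
    (F : Finset ℕ) (hc : G.MonoEdgesResolved A c) (hb : b ∉ A)
    (hclique : ∀ D ⊆ A, G.IsClique (D : Set α) → (∀ u ∈ D, G.Adj u b) → #D + #F < t) :
    ∃ c' : α → ℕ, Set.EqOn c' c A ∧ c' b < t ∧ c' b ∉ F ∧
      G.MonoEdgesResolved (insert b A) c' := by
  classical
  set X := A.filter fun u => G.Adj u b ∧ ¬ ∃ w ∈ A, c w ≠ c u ∧ Xor (G.Adj w u) (G.Adj w b)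
  -- Two vertices of `X` of different colours are adjacent, since otherwise one would
  -- distinguish the other from `b`; so one vertex of each colour of `X` gives a clique.
  obtain ⟨D, hDX, hDinj, hDimg⟩ := exists_subset_injOn_image_eq_of_surjOn (X : Set α) (X.image c)
    (by rw [coe_image]; exact Set.surjOn_image _ _)
  have hDclique : G.IsClique (D : Set α) := by
    intro x hx y hy hxy
    have hxX := mem_filter.1 (hDX hx)
    have hyX := mem_filter.1 (hDX hy)
    by_contra hnxy
    exact hxX.2.2 ⟨y, hyX.1, fun h => hxy (hDinj hx hy h.symm),
      Or.inr ⟨hyX.2.1, fun h => hnxy h.symm⟩⟩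
  have hcard : #(X.image c ∪ F) < #(range t) := calc
    #(X.image c ∪ F) ≤ #(X.image c) + #F := card_union_le _ _
    _ = #D + #F := by rw [← hDimg, card_image_of_injOn hDinj]
    _ < #(range t) := by
      rw [card_range]
      exact hclique D (fun x hx => (mem_filter.1 (hDX hx)).1) hDclique
        fun u hu => (mem_filter.1 (hDX hu)).2.1
  obtain ⟨k, hkt, hk⟩ := exists_mem_notMem_of_card_lt_card hcard
  have hkX : ∀ v ∈ A, G.Adj v b → c v = k →
      ∃ w ∈ A, c w ≠ c v ∧ Xor (G.Adj w v) (G.Adj w b) := by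
    intro v hv hvb hvk
    by_contra h
    exact hk (mem_union_left _ (mem_image.2 ⟨v, mem_filter.2 ⟨hv, hvb, h⟩, hvk⟩))
  have hA : Set.EqOn (Function.update c b k) c A := fun x hx =>
    Function.update_of_ne (by rintro rfl; exact hb hx) _ _
  refine ⟨Function.update c b k, hA, by simpa using hkt,
    by simpa using fun h => hk (mem_union_right _ h), ?_⟩
  intro u hu v hv huv hcuv
  rcases mem_insert.1 hu with rfl | huA <;> rcases mem_insert.1 hv with rfl | hvA
  · exact (G.irrefl huv).elim
  · rw [Function.update_self, hA hvA] at hcuv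
    obtain ⟨w, hw, hwv, hwx⟩ := hkX v hvA huv.symm hcuv.symm
    refine ⟨w, mem_insert_of_mem hw, ?_, hwx.symm⟩
    rwa [hA hw, Function.update_self, hcuv]
  · rw [Function.update_self, hA huA] at hcuv
    obtain ⟨w, hw, hwu, hwx⟩ := hkX u huA huv hcuv
    exact ⟨w, mem_insert_of_mem hw, by rwa [hA hw, hA huA], hwx⟩
  · rw [hA huA, hA hvA] at hcuv
    obtain ⟨w, hw, hwu, hwx⟩ := hc u huA v hvA huv hcuv
    exact ⟨w, mem_insert_of_mem hw, by rwa [hA hw, hA huA], hwx⟩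

theorem MonoEdgesResolved.exists_extend {A S : Finset α} {c : α → ℕ} {t : ℕ} (hAS : A ⊆ S)
    (hc : G.MonoEdgesResolved A c) (hct : ∀ x ∈ A, c x < t)
    (hclique : ∀ b ∈ S, ∀ D ⊆ S, G.IsClique (D : Set α) → (∀ u ∈ D, G.Adj u b) → #D < t) :
    ∃ c' : α → ℕ, Set.EqOn c' c A ∧ (∀ x ∈ S, c' x < t) ∧ G.MonoEdgesResolved S c' := by
  suffices ∀ B ⊆ S, ∃ c' : α → ℕ, Set.EqOn c' c A ∧ (∀ x ∈ A ∪ B, c' x < t) ∧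
      G.MonoEdgesResolved (A ∪ B) c' by
    simpa [union_eq_right.2 hAS] using this S subset_rfl
  intro B
  induction B using Finset.induction_on with
  | empty => exact fun _ => ⟨c, Set.eqOn_refl _ _, by simpa using hct, by simpa using hc⟩
  | insert b B _ ih =>
    intro hBS
    obtain ⟨c₁, heq₁, hlt₁, hres₁⟩ := ih ((subset_insert b B).trans hBS)
    rw [union_insert]
    by_cases hb : b ∈ A ∪ B
    · rw [insert_eq_of_mem hb]
      exact ⟨c₁, heq₁, hlt₁, hres₁⟩
    have hABS : A ∪ B ⊆ S := union_subset hAS ((subset_insert b B).trans hBS)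
    obtain ⟨c₂, heq₂, hlt₂, -, hres₂⟩ := hres₁.exists_extend_insert ∅ hb
      fun D hD hDc hDb => by
        simpa using hclique b (hBS (mem_insert_self b B)) D (hD.trans hABS) hDc hDb
    refine ⟨c₂, (heq₂.mono (coe_subset.2 subset_union_left)).trans heq₁, ?_, hres₂⟩
    intro x hx
    rcases mem_insert.1 hx with rfl | hx
    · exact hlt₂
    · rw [heq₂ hx]; exact hlt₁ x hx

theorem ExistsNonadjOtherColor.insert {A : Finset α} {c c' : α → ℕ} {b w : α}
    (h : G.ExistsNonadjOtherColor A c) (heq : Set.EqOn c' c A) (hw : w ∈ insert b A)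
    (hbw : ¬ G.Adj b w) (hcw : c' w ≠ c' b) : G.ExistsNonadjOtherColor (insert b A) c' := by
  intro x hx
  rcases mem_insert.1 hx with rfl | hx
  · exact ⟨w, hw, hbw, hcw⟩
  · obtain ⟨y, hy, hxy, hcy⟩ := h x hx
    exact ⟨y, mem_insert_of_mem hy, hxy, by rwa [heq hx, heq hy]⟩

section NonadjOtherColor

variable {P : Finset α} {t : ℕ}

theorem exists_ssuperset_existsNonadjOtherColor {A : Finset α} {c : α → ℕ} {b w : α}
    (hclique : ∀ b ∈ P, ∀ D ⊆ P, G.IsClique (D : Set α) → (∀ u ∈ D, G.Adj u b) → #D + 1 < t)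
    (hAP : A ⊆ P) (hbP : b ∈ P) (hbA : b ∉ A) (hwP : w ∈ P) (hwb : w ≠ b) (hbw : ¬ G.Adj b w)
    (hct : ∀ x ∈ A, c x < t) (hres : G.MonoEdgesResolved A c)
    (hpart : G.ExistsNonadjOtherColor A c) :
    ∃ A' ⊆ P, A ⊂ A' ∧ ∃ c' : α → ℕ, (∀ x ∈ A', c' x < t) ∧ G.MonoEdgesResolved A' c' ∧
      G.ExistsNonadjOtherColor A' c' := by
  have hF : ∀ (B : Finset α) (x : α) (F : Finset ℕ), #F ≤ 1 → B ⊆ P → x ∈ P →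
      ∀ D ⊆ B, G.IsClique (D : Set α) → (∀ u ∈ D, G.Adj u x) → #D + #F < t :=
    fun B x F hF hB hx D hD hDc hDx => by have := hclique x hx D (hD.trans hB) hDc hDx; omega
  have hlt : ∀ {B : Finset α} {c c' : α → ℕ} {x : α}, (∀ y ∈ B, c y < t) → Set.EqOn c' c B →
      c' x < t → ∀ y ∈ insert x B, c' y < t := by
    intro B c c' x hB heq hx y hy
    rcases mem_insert.1 hy with rfl | hy
    · exact hx
    · rw [heq hy]; exact hB y hy
  by_cases hwA : w ∈ A
  · -- `b` avoids the colour of its non-neighbour `w`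
    obtain ⟨c', heq, hbt, hbF, hres'⟩ :=
      hres.exists_extend_insert {c w} hbA (hF _ _ _ (card_singleton _).le hAP hbP)
    refine ⟨insert b A, insert_subset hbP hAP, ssubset_insert hbA, c', hlt hct heq hbt, hres',
      hpart.insert heq (mem_insert_of_mem hwA) hbw ?_⟩
    rw [heq hwA]; exact fun h => hbF (mem_singleton.2 h.symm)
  · -- colour `b` freely, then let `w` avoid the colour of `b`
    obtain ⟨c₁, heq₁, hbt, -, hres₁⟩ :=
      hres.exists_extend_insert ∅ hbA (hF _ _ _ (by simp) hAP hbP)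
    have hwA' : w ∉ insert b A := by simp [hwb, hwA]
    obtain ⟨c₂, heq₂, hwt, hwF, hres₂⟩ := hres₁.exists_extend_insert {c₁ b} hwA'
      (hF _ _ _ (card_singleton _).le (insert_subset hbP hAP) hwP)
    have hcbw : c₂ w ≠ c₂ b := by
      rw [heq₂ (mem_insert_self b A)]; exact fun h => hwF (mem_singleton.2 h)
    refine ⟨insert w (insert b A), insert_subset hwP (insert_subset hbP hAP),
      (ssubset_insert hbA).trans (ssubset_insert hwA'), c₂,
      hlt (hlt hct heq₁ hbt) heq₂ hwt, hres₂, ?_⟩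
    intro x hx
    rcases mem_insert.1 hx with rfl | hx
    · exact ⟨b, mem_insert_of_mem (mem_insert_self b A), fun h => hbw h.symm, hcbw.symm⟩
    rcases mem_insert.1 hx with rfl | hx
    · exact ⟨w, mem_insert_self _ _, hbw, hcbw⟩
    obtain ⟨y, hy, hxy, hcy⟩ := hpart x hx
    refine ⟨y, mem_insert_of_mem (mem_insert_of_mem hy), hxy, ?_⟩
    rwa [heq₂ (mem_insert_of_mem hx), heq₂ (mem_insert_of_mem hy), heq₁ hx, heq₁ hy]

theorem exists_coloring_monoEdgesResolved_existsNonadjOtherColor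
    (hclique : ∀ b ∈ P, ∀ D ⊆ P, G.IsClique (D : Set α) → (∀ u ∈ D, G.Adj u b) → #D + 1 < t)
    (hP : ∀ b ∈ P, ∃ w ∈ P, w ≠ b ∧ ¬ G.Adj b w) :
    ∃ c : α → ℕ, (∀ x ∈ P, c x < t) ∧ G.MonoEdgesResolved P c ∧
      G.ExistsNonadjOtherColor P c := by
  classical
  let good : Finset α → Prop := fun A => ∃ c : α → ℕ,
    (∀ x ∈ A, c x < t) ∧ G.MonoEdgesResolved A c ∧ G.ExistsNonadjOtherColor A c
  obtain ⟨A, hA, hmax⟩ := (P.powerset.filter good).exists_max_image card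
    ⟨∅, mem_filter.2 ⟨empty_mem_powerset P, 0, by simp [MonoEdgesResolved, ExistsNonadjOtherColor]⟩⟩
  obtain ⟨hAP, c, hct, hres, hpart⟩ : A ⊆ P ∧ good A := by simpa using hA
  by_cases hAeq : A = P
  · exact hAeq ▸ ⟨c, hct, hres, hpart⟩
  obtain ⟨b, hbP, hbA⟩ := exists_of_ssubset (hAP.ssubset_of_ne hAeq)
  obtain ⟨w, hwP, hwb, hbw⟩ := hP b hbP
  obtain ⟨A', hA'P, hAA', hA'⟩ := exists_ssuperset_existsNonadjOtherColor hclique hAP hbP hbA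
    hwP hwb hbw hct hres hpart
  exact absurd (hmax A' (by simpa using ⟨hA'P, hA'⟩)) (card_lt_card hAA').not_ge

end NonadjOtherColor

end Coloring

section Clique

variable {α : Type*} [Fintype α] [DecidableEq α] {G : SimpleGraph α}

theorem IsClique.card_add_one_le_cliqueNum {D : Finset α} {b : α} (hD : G.IsClique (D : Set α))
    (hb : ∀ u ∈ D, G.Adj u b) : #D + 1 ≤ G.cliqueNum := by
  have hbD : b ∉ D := fun h => G.irrefl (hb b h)
  have hclique := hD.insert fun u hu _ => (hb u hu).symm
  rw [← coe_insert] at hclique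
  simpa [card_insert_of_notMem hbD] using hclique.card_le_cliqueNum

theorem IsClique.card_add_two_le_cliqueNum {D : Finset α} {b v : α} (hD : G.IsClique (D : Set α))
    (hDb : ∀ u ∈ D, G.Adj u b) (hDv : ∀ u ∈ D, G.Adj u v) (hbv : G.Adj b v) :
    #D + 2 ≤ G.cliqueNum := by
  have hbD : b ∉ D := fun h => G.irrefl (hDb b h)
  have hclique := hD.insert fun u hu _ => (hDb u hu).symm
  rw [← coe_insert] at hclique
  have := hclique.card_add_one_le_cliqueNum (b := v) (by simpa [hbv] using hDv)
  rwa [card_insert_of_notMem hbD] at this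

end Clique

theorem cliqueNum_top {α : Type*} [Fintype α] :
    (⊤ : SimpleGraph α).cliqueNum = Fintype.card α := by
  obtain ⟨s, hs⟩ := (⊤ : SimpleGraph α).exists_isNClique_cliqueNum
  refine le_antisymm (hs.card_eq ▸ card_le_univ s) ?_
  have hclique : (⊤ : SimpleGraph α).IsClique (univ : Finset α) := fun _ _ _ _ h => h
  simpa using hclique.card_le_cliqueNum

section ClosedNeighborhood

variable {α : Type*} [Fintype α] [DecidableEq α] (G : SimpleGraph α) [DecidableRel G.Adj]

def closedNeighborFinset (v : α) : Finset α := insert v (G.neighborFinset v)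

variable {G}

theorem mem_closedNeighborFinset {v w : α} :
    w ∈ G.closedNeighborFinset v ↔ w = v ∨ G.Adj v w := by
  simp [closedNeighborFinset]

theorem adj_of_closedNeighborFinset_eq {x y : α}
    (h : G.closedNeighborFinset x = G.closedNeighborFinset y) (hxy : x ≠ y) : G.Adj x y :=
  (mem_closedNeighborFinset.1 (h ▸ mem_closedNeighborFinset.2 (Or.inl rfl))).resolve_left hxy.symm

theorem exists_nonadj_of_card_closedNeighborFinset_le {v b : α}
    (hmax : ∀ x, #(G.closedNeighborFinset x) ≤ #(G.closedNeighborFinset v)) (hvb : G.Adj v b)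
    (hb : G.closedNeighborFinset b ≠ G.closedNeighborFinset v) :
    ∃ w, G.Adj v w ∧ G.closedNeighborFinset w ≠ G.closedNeighborFinset v ∧ w ≠ b ∧
      ¬ G.Adj b w := by
  obtain ⟨w, hwv, hwb⟩ :=
    not_subset.1 fun hsub => hb (eq_of_subset_of_card_le hsub (hmax b)).symm
  rw [mem_closedNeighborFinset, not_or] at hwb
  have hvw : G.Adj v w :=
    (mem_closedNeighborFinset.1 hwv).resolve_left fun h => hwb.2 (h ▸ hvb.symm)
  refine ⟨w, hvw, fun h => hwb.2 ?_, hwb.1, hwb.2⟩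
  have hbw := h ▸ mem_closedNeighborFinset.2 (Or.inr hvb)
  exact ((mem_closedNeighborFinset.1 hbw).resolve_left fun h => hwb.1 h.symm).symm

theorem card_filter_closedNeighborFinset_eq_lt_cliqueNum (hc : G.Connected) (hG : G ≠ ⊤) (v : α) :
    #{x | G.closedNeighborFinset x = G.closedNeighborFinset v} < G.cliqueNum := by
  set T : Finset α := {x | G.closedNeighborFinset x = G.closedNeighborFinset v}
  have hT : ∀ x ∈ T, G.closedNeighborFinset x = G.closedNeighborFinset v :=
    fun x hx => (mem_filter.1 hx).2
  have hTadj : ∀ x ∈ T, ∀ y ∈ T, x ≠ y → G.Adj x y :=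
    fun x hx y hy => adj_of_closedNeighborFinset_eq ((hT x hx).trans (hT y hy).symm)
  obtain ⟨s, hs⟩ : ∃ s, s ∉ T := by
    by_contra! h
    exact hG (eq_top_iff.2 fun x y hxy => hTadj x (h x) y (h y) hxy)
  -- an edge leaving `T` ends at a common neighbour of all of `T`
  obtain ⟨d, -, hd₁, hd₂⟩ :=
    (hc.preconnected v s).some.exists_boundary_dart (T : Set α) (by simp [T]) hs
  have hd : ∀ x ∈ T, G.Adj x d.snd := fun x hx => by
    have := (hT _ hd₁).trans (hT x hx).symm ▸ mem_closedNeighborFinset.2 (Or.inr d.adj)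
    exact (mem_closedNeighborFinset.1 this).resolve_left fun h => hd₂ (h ▸ hx)
  exact IsClique.card_add_one_le_cliqueNum (fun x hx y hy => hTadj x hx y hy) hd

end ClosedNeighborhood

section NotTop

variable {α : Type*} [Fintype α] [DecidableEq α] {G : SimpleGraph α}

theorem isLocalAdjResolving_compl_insert_filter {U : Finset α} {c : α → ℕ} {v : α} (hvU : v ∉ U)
    (hres : G.MonoEdgesResolved U c)
    (hnbr : ∀ x ∈ U, G.Adj v x → ∃ w ∈ U, G.Adj v w ∧ ¬ G.Adj x w ∧ c w ≠ c x) (j : ℕ) :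
    IsLocalAdjResolving G (univ \ insert v {x ∈ U | c x = j}) := by
  have hout : ∀ w ∈ U, c w ≠ j → w ∈ univ \ insert v {x ∈ U | c x = j} := fun w hw hwj => by
    simp [hwj, show w ≠ v by rintro rfl; exact hvU hw]
  intro x y hxy hx hy
  simp only [mem_sdiff, mem_univ, true_and, not_not, mem_insert, mem_filter] at hx hy
  rcases hx with rfl | ⟨hxU, hxj⟩ <;> rcases hy with rfl | ⟨hyU, hyj⟩
  · exact (G.irrefl hxy).elim
  · obtain ⟨w, hwU, hvw, hyw, hcw⟩ := hnbr y hyU hxy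
    exact ⟨w, hout w hwU (hyj ▸ hcw), Or.inl ⟨hvw.symm, fun h => hyw h.symm⟩⟩
  · obtain ⟨w, hwU, hvw, hxw, hcw⟩ := hnbr x hxU hxy.symm
    exact ⟨w, hout w hwU (hxj ▸ hcw), Or.inr ⟨hvw.symm, fun h => hxw h.symm⟩⟩
  · obtain ⟨w, hwU, hcw, hw⟩ := hres x hxU y hyU hxy (hxj.trans hyj.symm)
    exact ⟨w, hout w hwU (hxj ▸ hcw), hw⟩

theorem exists_isLocalAdjResolving_compl_card_lt_cliqueNum_mul (hc : G.Connected) (hG : G ≠ ⊤) :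
    ∃ W : Finset α, IsLocalAdjResolving G (univ \ W) ∧ Fintype.card α < G.cliqueNum * #W := by
  classical
  set N := G.closedNeighborFinset
  obtain ⟨v, -, hmax⟩ := univ.exists_max_image (fun x => #(N x)) (univ_nonempty_iff.2 hc.nonempty)
  set U : Finset α := {x | N x ≠ N v}
  set P : Finset α := {x | G.Adj v x ∧ N x ≠ N v}
  have hPU : P ⊆ U := fun x hx => by simp_all [U, P]
  have hTU : #{x | N x = N v} + #U = Fintype.card α := by
    simpa using card_filter_add_card_filter_not (s := univ) (fun x => N x = N v)
  have hTω := card_filter_closedNeighborFinset_eq_lt_cliqueNum hc hG v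
  obtain ⟨c₁, hct₁, hres₁, hpart₁⟩ := exists_coloring_monoEdgesResolved_existsNonadjOtherColor
    (t := G.cliqueNum) (P := P)
    (fun b hb D hDP hD hDb => by
      have := hD.card_add_two_le_cliqueNum hDb (fun u hu => (mem_filter.1 (hDP hu)).2.1.symm)
        (mem_filter.1 hb).2.1.symm
      omega)
    (fun b hb => by
      obtain ⟨w, hvw, hw, hwb, hbw⟩ :=
        exists_nonadj_of_card_closedNeighborFinset_le (fun x => hmax x (mem_univ x))
          (mem_filter.1 hb).2.1 (mem_filter.1 hb).2.2
      exact ⟨w, mem_filter.2 ⟨mem_univ w, hvw, hw⟩, hwb, hbw⟩)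
  obtain ⟨c, heq, hct, hres⟩ := hres₁.exists_extend hPU hct₁
    fun b _ D _ hD hDb => by have := hD.card_add_one_le_cliqueNum hDb; omega
  have hnbr : ∀ x ∈ U, G.Adj v x → ∃ w ∈ U, G.Adj v w ∧ ¬ G.Adj x w ∧ c w ≠ c x := by
    intro x hxU hvx
    have hxP : x ∈ P := mem_filter.2 ⟨mem_univ x, hvx, (mem_filter.1 hxU).2⟩
    obtain ⟨w, hwP, hxw, hcw⟩ := hpart₁ x hxP
    exact ⟨w, hPU hwP, (mem_filter.1 hwP).2.1, hxw, by rwa [heq hxP, heq hwP]⟩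
  have hω : (0 : ℚ) < G.cliqueNum := by exact_mod_cast hTω.pos
  obtain ⟨j, -, hj⟩ := exists_le_card_fiber_of_nsmul_le_card_of_maps_to (s := U)
    (t := range G.cliqueNum) (f := c) (b := (#U : ℚ) / G.cliqueNum)
    (fun x hx => mem_range.2 (hct x hx)) (nonempty_range_iff.2 (by exact_mod_cast hω.ne'))
    (by rw [card_range, nsmul_eq_mul, mul_div_cancel₀ _ hω.ne'])
  have hvU : v ∉ U := by simp [U]
  refine ⟨_, isLocalAdjResolving_compl_insert_filter hvU hres hnbr j, ?_⟩
  have hUj : #U ≤ G.cliqueNum * #{x ∈ U | c x = j} := by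
    rw [div_le_iff₀ hω] at hj; exact_mod_cast (mul_comm _ _).le.trans' hj
  rw [card_insert_of_notMem fun h => hvU (mem_filter.1 h).1]
  nlinarith

end NotTop

end SimpleGraph

open SimpleGraph

section LocalDimension

variable {α : Type*} {G : SimpleGraph α}

theorem IsLocalAdjResolving.isLocalResolving {S : Finset α} (h : IsLocalAdjResolving G S) :
    IsLocalResolving G S := by
  intro u v huv hu hv
  obtain ⟨w, hw, hx⟩ := h u v huv hu hv
  refine ⟨w, hw, ?_⟩
  rcases hx with ⟨hwu, hwv⟩ | ⟨hwv, hwu⟩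
  · rw [dist_comm, dist_eq_one_iff_adj.2 hwu, dist_comm]
    exact fun h => hwv (dist_eq_one_iff_adj.1 h.symm)
  · rw [dist_comm (u := v), dist_eq_one_iff_adj.2 hwv, dist_comm]
    exact fun h => hwu (dist_eq_one_iff_adj.1 h)

theorem dimL_le_card {S : Finset α} (h : IsLocalResolving G S) : dimL G ≤ #S :=
  Nat.sInf_le ⟨S, rfl, h⟩

theorem le_dimL [Fintype α] {k : ℕ} (h : ∀ S, IsLocalResolving G S → k ≤ #S) : k ≤ dimL G :=
  le_csInf ⟨_, univ, rfl, fun _ _ _ hu => (hu (mem_univ _)).elim⟩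
    fun _ ⟨S, hS, hres⟩ => hS ▸ h S hres

theorem dimL_top [Fintype α] [DecidableEq α] [Nonempty α] :
    dimL (⊤ : SimpleGraph α) = Fintype.card α - 1 := by
  obtain ⟨v⟩ := ‹Nonempty α›
  refine le_antisymm ?_ (le_dimL fun S hS => ?_)
  · have hres : IsLocalResolving ⊤ (univ.erase v) := fun x y hxy hx hy => by
      simp only [mem_erase, mem_univ, and_true, not_not] at hx hy
      exact (hxy (hx.trans hy.symm)).elim
    simpa [card_erase_of_mem] using dimL_le_card hres
  · by_contra! hS'
    have : 1 < #(univ \ S) := by rw [card_sdiff_of_subset (subset_univ S), card_univ]; omega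
    obtain ⟨x, hx, y, hy, hxy⟩ := one_lt_card.1 this
    rw [mem_sdiff] at hx hy
    obtain ⟨w, hw, hne⟩ := hS x y hxy hx.2 hy.2
    have hxw : x ≠ w := fun h => hx.2 (h ▸ hw)
    have hyw : y ≠ w := fun h => hy.2 (h ▸ hw)
    exact hne (by rw [dist_eq_one_iff_adj.2 hxw, dist_eq_one_iff_adj.2 hyw])

end LocalDimension

theorem dimL_le_ratio (G : SimpleGraph V) (hc : G.Connected) :
    (dimL G : ℚ) ≤ (((G.cliqueNum : ℚ) - 1) / (G.cliqueNum : ℚ)) * (Fintype.card V : ℚ) ∧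
      ((dimL G : ℚ) = (((G.cliqueNum : ℚ) - 1) / (G.cliqueNum : ℚ)) * (Fintype.card V : ℚ) ↔
        G = ⊤) := by
  by_cases hG : G = ⊤
  · subst hG
    have : Nonempty V := hc.nonempty
    have hn : 0 < Fintype.card V := Fintype.card_pos
    have heq : (dimL (⊤ : SimpleGraph V) : ℚ) =
        ((((⊤ : SimpleGraph V).cliqueNum : ℚ) - 1) / ((⊤ : SimpleGraph V).cliqueNum : ℚ)) *
          (Fintype.card V : ℚ) := by
      rw [dimL_top, cliqueNum_top, Nat.cast_sub hn, Nat.cast_one, div_mul_cancel₀]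
      exact_mod_cast hn.ne'
    exact ⟨heq.le, iff_of_true heq rfl⟩
  obtain ⟨W, hW, hlt⟩ := exists_isLocalAdjResolving_compl_card_lt_cliqueNum_mul hc hG
  have hdim : dimL G + #W ≤ Fintype.card V := by
    have := dimL_le_card hW.isLocalResolving
    rw [card_sdiff_of_subset (subset_univ W), card_univ] at this
    have := card_le_univ W
    omega
  have hω : (0 : ℚ) < G.cliqueNum := by
    exact_mod_cast Nat.pos_of_ne_zero fun h => by simp [h] at hlt
  have hdimQ : (dimL G : ℚ) + #W ≤ Fintype.card V := by exact_mod_cast hdim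
  have hltQ : (Fintype.card V : ℚ) < G.cliqueNum * #W := by exact_mod_cast hlt
  have hstrict : (dimL G : ℚ) < ((G.cliqueNum : ℚ) - 1) / G.cliqueNum * Fintype.card V := by
    rw [div_mul_eq_mul_div, lt_div_iff₀ hω]
    nlinarith
  exact ⟨hstrict.le, iff_of_false hstrict.ne hG⟩
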